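/- Let {e^{tL}}_{t≥0} be a quantum dynamical semigroup of unital channels on M_d and let P := span{X ∈ M_d : L(X) = iaX for some a ∈ ℝ}. Then M_d = P ⊕ N as a direct sum of vector spaces, where N := {Y ∈ M_d : e^{tL}(Y) → 0 as t → ∞}. -/

import Mathlib

/-!
A unital channel `Φ` satisfies the Kadison–Schwarz identity
`Φ(X* X) - Φ(X)* Φ(X) = ∑ⱼ Kⱼ* Kⱼ` with `Kⱼ = X Vⱼ - Vⱼ Φ(X)` for any Kraus family `(Vⱼ)`, so, being
trace-preserving, it does not increase the Hilbert–Schmidt norm. Hence every orbit of `e^{tL}`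
is bounded. Boundedness rules out eigenvalues of `L` with positive real part, and Jordan blocks
for purely imaginary eigenvalues (on `x` with `(L - μ)²x = 0` the orbit is
`e^{tμ}(x + t(L - μ)x)`). So `M_d`, the sum of the generalized eigenspaces of `L`, is the sum
of eigenspaces for imaginary eigenvalues, which span `P`, and of generalized eigenspaces for
`Re μ < 0`, on which `e^{tL}` decays like `tᵏ e^{t Re μ}`. Finally `P ∩ N = 0`: in a basis of
`P` made of eigenvectors, the coordinates of `e^{tL}X` have constant modulus.
-/

noncomputable section
open scoped Kronecker
open Filter Topology Matrix

/-- `M_d`, the algebra of `d × d` complex matrices. -/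
abbrev Md (d : ℕ) := Matrix (Fin d) (Fin d) ℂ

/-- `Ad_U : X ↦ U* X U` for a unitary `U`. -/
def adU {d : ℕ} (U : Matrix.unitaryGroup (Fin d) ℂ) : Md d →ₗ[ℂ] Md d where
  toFun X := (U : Md d)ᴴ * X * (U : Md d)
  map_add' X Y := by simp [Matrix.mul_add, Matrix.add_mul]
  map_smul' c X := by simp [Matrix.mul_smul, Matrix.smul_mul]

/-- A linear map is completely positive if it has a Kraus decomposition. -/
def IsCP {d : ℕ} (Φ : Md d →ₗ[ℂ] Md d) : Prop :=
  ∃ (n : ℕ) (V : Fin n → Md d), ∀ X, Φ X = ∑ j, (V j)ᴴ * X * (V j)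

def IsUnital {d : ℕ} (Φ : Md d →ₗ[ℂ] Md d) : Prop := Φ 1 = 1

def IsTracePreserving {d : ℕ} (Φ : Md d →ₗ[ℂ] Md d) : Prop :=
  ∀ X, (Φ X).trace = X.trace

def IsHermitianPreserving {d : ℕ} (Φ : Md d →ₗ[ℂ] Md d) : Prop :=
  ∀ X, Φ Xᴴ = (Φ X)ᴴ

/-- A unital quantum channel: CP, unital and trace-preserving. -/
def IsUnitalChannel {d : ℕ} (Φ : Md d →ₗ[ℂ] Md d) : Prop :=
  IsCP Φ ∧ IsUnital Φ ∧ IsTracePreserving Φ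

/-- A mixed unitary channel: a convex combination of unitary conjugations. -/
def IsMixedUnitary {d : ℕ} (Φ : Md d →ₗ[ℂ] Md d) : Prop :=
  ∃ (ℓ : ℕ) (U : Fin ℓ → Matrix.unitaryGroup (Fin d) ℂ) (lam : Fin ℓ → ℝ),
    (∀ j, 0 ≤ lam j) ∧ (∀ j, lam j ≤ 1) ∧ (∑ j, lam j = 1) ∧
    Φ = ∑ j, (lam j : ℂ) • adU (U j)

/-- The Choi matrix `J(Φ) = (1/d) ∑_{i,j} E_{ij} ⊗ Φ(E_{ij})`. -/
def choi {d : ℕ} (Φ : Md d →ₗ[ℂ] Md d) : Matrix (Fin d × Fin d) (Fin d × Fin d) ℂ :=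
  (d : ℂ)⁻¹ • ∑ i : Fin d, ∑ j : Fin d,
    (Matrix.single i j (1 : ℂ)) ⊗ₖ Φ (Matrix.single i j (1 : ℂ))

/-- `⟨Φ, Ψ⟩ = tr(J(Φ)* J(Ψ))`; this is a real number whenever `Φ, Ψ` are
Hermitian-preserving, so we record its real part. -/
def pairRe {d : ℕ} (Φ Ψ : Md d →ₗ[ℂ] Md d) : ℝ := (((choi Φ)ᴴ * choi Ψ).trace).re

/-- The Hilbert–Schmidt (Choi) norm `‖Φ‖₂ = tr(J(Φ)* J(Φ))^{1/2}`. -/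
def hsNorm {d : ℕ} (Φ : Md d →ₗ[ℂ] Md d) : ℝ := Real.sqrt (pairRe Φ Φ)

attribute [local instance] Matrix.normedAddCommGroup Matrix.normedSpace

/-- The exponential `e^{tL}` of a linear map `L` on `M_d`. -/
def expL {d : ℕ} (L : Md d →ₗ[ℂ] Md d) (t : ℝ) : Md d →ₗ[ℂ] Md d :=
  letI : IsTopologicalRing (Md d →L[ℂ] Md d) :=
    @NonUnitalSeminormedRing.toIsTopologicalRing _ (@SeminormedRing.toNonUnitalSeminormedRing _
      (@NormedRing.toSeminormedRing _ (ContinuousLinearMap.toNormedRing (𝕜 := ℂ) (E := Md d))))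
  ((NormedSpace.exp ((t : ℂ) • (LinearMap.toContinuousLinearMap L)) :
      Md d →L[ℂ] Md d)).toLinearMap

/-- `P = span{X : L X = i a X for some real a}`. -/
def periphGen {d : ℕ} (L : Md d →ₗ[ℂ] Md d) : Submodule ℂ (Md d) :=
  Submodule.span ℂ {X : Md d | ∃ a : ℝ, L X = ((a : ℂ) * Complex.I) • X}

/-- `N = {Y : e^{tL} Y → 0 as t → ∞}`. -/
def decaySet {d : ℕ} (L : Md d →ₗ[ℂ] Md d) : Set (Md d) :=
  {Y : Md d | Filter.Tendsto (fun t : ℝ => expL L t Y) atTop (nhds 0)}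

open NormedSpace

theorem NormedSpace.exp_eq_exp_smul_exp_sub_algebraMap {𝔸 : Type*} [NormedRing 𝔸]
    [NormedAlgebra ℂ 𝔸] [CompleteSpace 𝔸] (a : 𝔸) (μ : ℂ) :
    exp a = Complex.exp μ • exp (a - algebraMap ℂ 𝔸 μ) := by
  let _ : NormedAlgebra ℚ 𝔸 := NormedAlgebra.restrictScalars ℚ ℂ 𝔸
  conv_lhs => rw [← add_sub_cancel (algebraMap ℂ 𝔸 μ) a]
  rw [exp_add_of_commute (Algebra.commutes μ _), ← algebraMap_exp_comm, Algebra.smul_def,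
    Complex.exp_eq_exp_ℂ]

theorem Complex.tendsto_exp_mul_mul_pow_atTop_nhds_zero {μ : ℂ} (hμ : μ.re < 0) (m : ℕ) :
    Tendsto (fun t : ℝ => Complex.exp (t * μ) * (t : ℂ) ^ m) atTop (𝓝 0) := by
  rw [tendsto_zero_iff_norm_tendsto_zero]
  refine (tendsto_rpow_mul_exp_neg_mul_atTop_nhds_zero m (-μ.re) (by linarith)).congr' ?_
  filter_upwards [eventually_ge_atTop 0] with t ht
  simp [Complex.norm_exp, abs_of_nonneg ht, mul_comm]

theorem LinearIndependent.tendsto_zero_of_tendsto_sum_smul {𝕜 E ι α : Type*}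
    [NontriviallyNormedField 𝕜] [CompleteSpace 𝕜] [NormedAddCommGroup E] [NormedSpace 𝕜 E]
    [Fintype ι] {v : ι → E} (hv : LinearIndependent 𝕜 v) {l : Filter α} {c : α → ι → 𝕜}
    (hc : Tendsto (fun s => ∑ i, c s i • v i) l (𝓝 0)) : Tendsto c l (𝓝 0) := by
  have hinj := linearIndependent_iff_injective_fintypeLinearCombination.mp hv
  have hemb := LinearMap.isClosedEmbedding_of_injective (LinearMap.ker_eq_bot.mpr hinj)
  rw [hemb.isEmbedding.tendsto_nhds_iff]
  simpa [Function.comp_def, Fintype.linearCombination_apply] using hc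

theorem Submodule.existsUnique_mem_mem_eq_add_of_isCompl {R M : Type*} [Ring R]
    [AddCommGroup M] [Module R M] {p q : Submodule R M} (hpq : IsCompl p q) (z : M) :
    ∃! w : M × M, w.1 ∈ p ∧ w.2 ∈ q ∧ z = w.1 + w.2 := by
  obtain ⟨u, v, huv, huniq⟩ := Submodule.existsUnique_add_of_isCompl hpq z
  refine ⟨(u, v), ⟨u.2, v.2, huv.symm⟩, ?_⟩
  rintro ⟨r, s⟩ ⟨hr, hs, hz⟩
  obtain ⟨rfl, rfl⟩ := huniq ⟨r, hr⟩ ⟨s, hs⟩ hz.symm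
  rfl

section

variable {E : Type*} [NormedAddCommGroup E] [NormedSpace ℂ E]

theorem ContinuousLinearMap.exp_apply_eq_sum_of_pow_apply_eq_zero [CompleteSpace E]
    {B : E →L[ℂ] E} {k : ℕ} {x : E} (hx : (B ^ k) x = 0) :
    exp B x = ∑ m ∈ Finset.range k, (m.factorial⁻¹ : ℂ) • (B ^ m) x := by
  have hsum := (expSeries_summable' (𝕂 := ℂ) B).hasSum.mapL (ContinuousLinearMap.apply ℂ E x)
  rw [exp_eq_tsum ℂ]
  refine (hsum.unique ?_)
  refine hasSum_sum_of_ne_finset_zero fun m hm => ?_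
  obtain ⟨j, rfl⟩ := Nat.exists_eq_add_of_le (not_lt.mp (Finset.mem_range.not.mp hm))
  simp [add_comm k j, pow_add, hx]

theorem ContinuousLinearMap.exp_smul_apply_of_pow_sub_smul_apply_eq_zero [CompleteSpace E]
    {A : E →L[ℂ] E} {μ : ℂ} {k : ℕ} {x : E} (hx : ((A - μ • 1) ^ k) x = 0) (t : ℂ) :
    exp (t • A) x =
      Complex.exp (t * μ) •
        ∑ m ∈ Finset.range k, (t ^ m / m.factorial) • ((A - μ • 1) ^ m) x := by
  have hsplit : t • A - algebraMap ℂ (E →L[ℂ] E) (t * μ) = t • (A - μ • 1) := by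
    rw [Algebra.algebraMap_eq_smul_one, smul_sub, smul_smul]
  have htx : ((t • (A - μ • 1)) ^ k) x = 0 := by simp [smul_pow, hx]
  rw [exp_eq_exp_smul_exp_sub_algebraMap _ (t * μ), hsplit, _root_.smul_apply,
    exp_apply_eq_sum_of_pow_apply_eq_zero htx]
  congr 1
  refine Finset.sum_congr rfl fun m _ => ?_
  rw [smul_pow, _root_.smul_apply, smul_smul, div_eq_inv_mul]

theorem ContinuousLinearMap.coe_sub_smul_one_pow_apply {A : E →L[ℂ] E} (μ : ℂ) (k : ℕ)
    (x : E) :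
    (((A : E →ₗ[ℂ] E) - μ • 1) ^ k) x = ((A - μ • 1) ^ k) x := by
  have : (A : E →ₗ[ℂ] E) - μ • 1 = ↑(A - μ • 1) := by ext; simp
  rw [this, ← ContinuousLinearMap.toLinearMap_pow]
  rfl

theorem ContinuousLinearMap.exp_smul_apply_of_apply_eq_smul [CompleteSpace E]
    {A : E →L[ℂ] E} {μ : ℂ} {x : E} (hx : A x = μ • x) (t : ℂ) :
    exp (t • A) x = Complex.exp (t * μ) • x := by
  simpa using exp_smul_apply_of_pow_sub_smul_apply_eq_zero (k := 1) (by simp [hx]) t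

def HasBoundedOrbits (A : E →L[ℂ] E) : Prop :=
  ∀ x, ∃ C, ∀ t : ℝ, 0 ≤ t → ‖exp ((t : ℂ) • A) x‖ ≤ C

theorem eq_zero_of_forall_norm_add_smul_le {x y : E} {C : ℝ}
    (h : ∀ t : ℝ, 0 ≤ t → ‖x + (t : ℂ) • y‖ ≤ C) : y = 0 := by
  by_contra hy
  have hgrow : Tendsto (fun t : ℝ => t * ‖y‖ - ‖x‖) atTop atTop :=
    tendsto_atTop_add_const_right _ _ (tendsto_id.atTop_mul_const (norm_pos_iff.mpr hy))
  obtain ⟨t, hCt, ht⟩ := ((hgrow.eventually_gt_atTop C).and (eventually_ge_atTop 0)).exists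
  have := norm_sub_norm_le ((t : ℂ) • y) (-x)
  rw [norm_smul, Complex.norm_real, Real.norm_of_nonneg ht, norm_neg, sub_neg_eq_add,
    add_comm] at this
  linarith [h t ht]

theorem HasBoundedOrbits.re_nonpos_of_apply_eq_smul [CompleteSpace E] {A : E →L[ℂ] E}
    (hA : HasBoundedOrbits A) {μ : ℂ} {x : E} (hx : A x = μ • x) (hx0 : x ≠ 0) :
    μ.re ≤ 0 := by
  by_contra! hμ
  obtain ⟨C, hC⟩ := hA x
  have hgrow : Tendsto (fun t : ℝ => Real.exp (t * μ.re) * ‖x‖) atTop atTop :=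
    (Real.tendsto_exp_atTop.comp (tendsto_id.atTop_mul_const hμ)).atTop_mul_const
      (norm_pos_iff.mpr hx0)
  obtain ⟨t, hCt, ht⟩ := ((hgrow.eventually_gt_atTop C).and (eventually_ge_atTop 0)).exists
  have := hC t ht
  rw [ContinuousLinearMap.exp_smul_apply_of_apply_eq_smul hx, norm_smul,
    Complex.norm_exp] at this
  simp only [Complex.mul_re, Complex.ofReal_re, Complex.ofReal_im, zero_mul, sub_zero] at this
  linarith

theorem HasBoundedOrbits.maxGenEigenspace_eq_bot [CompleteSpace E] {A : E →L[ℂ] E}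
    (hA : HasBoundedOrbits A) {μ : ℂ} (hμ : 0 < μ.re) :
    Module.End.maxGenEigenspace (A : E →ₗ[ℂ] E) μ = ⊥ := by
  by_contra h
  obtain ⟨x, hx, hx0⟩ := Module.End.HasEigenvalue.exists_hasEigenvector
    ((Module.End.hasUnifEigenvalue_iff_hasUnifEigenvalue_one (k := ⊤) (by simp)).mp h)
  exact (hA.re_nonpos_of_apply_eq_smul (Module.End.mem_eigenspace_iff.mp hx) hx0).not_gt hμ

theorem HasBoundedOrbits.sub_smul_one_apply_eq_zero_of_sq [CompleteSpace E] {A : E →L[ℂ] E}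
    (hA : HasBoundedOrbits A) {μ : ℂ} (hμ : μ.re = 0) {x : E}
    (hx : ((A - μ • (1 : E →L[ℂ] E)) ^ 2) x = 0) :
    (A - μ • 1) x = 0 := by
  obtain ⟨C, hC⟩ := hA x
  refine eq_zero_of_forall_norm_add_smul_le (x := x) (C := C) fun t ht => ?_
  have := hC t ht
  rw [ContinuousLinearMap.exp_smul_apply_of_pow_sub_smul_apply_eq_zero hx, norm_smul,
    Complex.norm_exp] at this
  simpa [Finset.sum_range_succ, hμ] using this

theorem HasBoundedOrbits.maxGenEigenspace_eq_eigenspace [CompleteSpace E] {A : E →L[ℂ] E}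
    (hA : HasBoundedOrbits A) {μ : ℂ} (hμ : μ.re = 0) :
    Module.End.maxGenEigenspace (A : E →ₗ[ℂ] E) μ =
      Module.End.eigenspace (A : E →ₗ[ℂ] E) μ := by
  set B : Module.End ℂ E := (A : E →ₗ[ℂ] E) - μ • 1
  have hker : LinearMap.ker (B ^ 1) = LinearMap.ker (B ^ 2) := by
    refine le_antisymm (by rw [pow_two, pow_one]; exact LinearMap.ker_le_ker_comp B B)
      fun x hx => ?_
    rw [LinearMap.mem_ker, ContinuousLinearMap.coe_sub_smul_one_pow_apply] at hx ⊢
    simpa using hA.sub_smul_one_apply_eq_zero_of_sq hμ hx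
  refine le_antisymm (fun x hx => ?_) Module.End.eigenspace_le_maxGenEigenspace
  obtain ⟨k, hk⟩ := (Module.End.mem_maxGenEigenspace _ _ _).mp hx
  have hk1 : x ∈ LinearMap.ker (B ^ (1 + k)) := by
    rw [pow_add, Module.End.mul_eq_comp]
    exact LinearMap.ker_le_ker_comp (B ^ k) (B ^ 1) hk
  rw [← Module.End.ker_pow_constant hker k, pow_one] at hk1
  rwa [Module.End.eigenspace_def]

def decaySubmodule (A : E →L[ℂ] E) : Submodule ℂ E where
  carrier := {x | Tendsto (fun t : ℝ => exp ((t : ℂ) • A) x) atTop (𝓝 0)}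
  add_mem' hx hy := by simpa using hx.add hy
  zero_mem' := by simp
  smul_mem' c x hx := by simpa using hx.const_smul c

@[simp]
theorem mem_decaySubmodule {A : E →L[ℂ] E} {x : E} :
    x ∈ decaySubmodule A ↔ Tendsto (fun t : ℝ => exp ((t : ℂ) • A) x) atTop (𝓝 0) :=
  Iff.rfl

def peripheralSpan (A : E →L[ℂ] E) : Submodule ℂ E :=
  Submodule.span ℂ {x | ∃ a : ℝ, A x = ((a : ℂ) * Complex.I) • x}

theorem maxGenEigenspace_le_decaySubmodule [CompleteSpace E] {A : E →L[ℂ] E} {μ : ℂ}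
    (hμ : μ.re < 0) : Module.End.maxGenEigenspace (A : E →ₗ[ℂ] E) μ ≤ decaySubmodule A := by
  intro x hx
  obtain ⟨k, hk⟩ := (Module.End.mem_maxGenEigenspace _ _ _).mp hx
  rw [ContinuousLinearMap.coe_sub_smul_one_pow_apply] at hk
  rw [mem_decaySubmodule]
  simp_rw [ContinuousLinearMap.exp_smul_apply_of_pow_sub_smul_apply_eq_zero hk,
    Finset.smul_sum, smul_smul]
  have := tendsto_finsetSum (Finset.range k) fun m _ =>
    ((Complex.tendsto_exp_mul_mul_pow_atTop_nhds_zero hμ m).div_const m.factorial).smul_const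
      (((A - μ • 1) ^ m) x)
  simpa only [zero_div, zero_smul, Finset.sum_const_zero, mul_div_assoc] using this

theorem HasBoundedOrbits.maxGenEigenspace_le_sup [CompleteSpace E] {A : E →L[ℂ] E}
    (hA : HasBoundedOrbits A) (μ : ℂ) :
    Module.End.maxGenEigenspace (A : E →ₗ[ℂ] E) μ ≤
      peripheralSpan A ⊔ decaySubmodule A := by
  rcases lt_trichotomy μ.re 0 with hneg | hzero | hpos
  · exact le_sup_of_le_right (maxGenEigenspace_le_decaySubmodule hneg)
  · refine le_sup_of_le_left ?_
    rw [hA.maxGenEigenspace_eq_eigenspace hzero]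
    refine fun x hx => Submodule.subset_span ⟨μ.im, ?_⟩
    have hμ : (μ.im : ℂ) * Complex.I = μ := Complex.ext (by simp [hzero]) (by simp)
    rw [hμ]
    exact Module.End.mem_eigenspace_iff.mp hx
  · rw [hA.maxGenEigenspace_eq_bot hpos]
    exact bot_le

theorem HasBoundedOrbits.peripheralSpan_sup_decaySubmodule [FiniteDimensional ℂ E]
    {A : E →L[ℂ] E} (hA : HasBoundedOrbits A) : peripheralSpan A ⊔ decaySubmodule A = ⊤ := by
  have := FiniteDimensional.complete ℂ E
  rw [eq_top_iff, ← Module.End.iSup_maxGenEigenspace_eq_top]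
  exact iSup_le hA.maxGenEigenspace_le_sup

theorem disjoint_peripheralSpan_decaySubmodule [FiniteDimensional ℂ E] (A : E →L[ℂ] E) :
    Disjoint (peripheralSpan A) (decaySubmodule A) := by
  have := FiniteDimensional.complete ℂ E
  rw [Submodule.disjoint_def]
  intro x hxP hxN
  obtain ⟨b, hbS, hspan, hli⟩ :=
    exists_linearIndependent ℂ {x | ∃ a : ℝ, A x = ((a : ℂ) * Complex.I) • x}
  have := hli.setFinite.fintype
  obtain ⟨c, rfl⟩ := (Submodule.mem_span_range_iff_exists_fun ℂ).mp
    (by rwa [Subtype.range_coe, hspan] : x ∈ Submodule.span ℂ (Set.range ((↑) : b → E)))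
  choose a ha using fun i : b => hbS i.2
  have hexp : ∀ t : ℝ, exp ((t : ℂ) • A) (∑ i, c i • (i : E)) =
      ∑ i, (c i * Complex.exp (t * ((a i : ℂ) * Complex.I))) • (i : E) := fun t => by
    simp only [map_sum, map_smul, ContinuousLinearMap.exp_smul_apply_of_apply_eq_smul (ha _),
      smul_smul]
  have hcoeff := tendsto_pi_nhds.mp (hli.tendsto_zero_of_tendsto_sum_smul
    (by simpa only [mem_decaySubmodule, hexp] using hxN))
  have hc : ∀ i, c i = 0 := fun i => by simpa [Complex.norm_exp] using (hcoeff i).norm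
  simp [hc]

end

theorem Matrix.re_trace_conjTranspose_mul_self {m n : Type*} [Fintype m] [Fintype n]
    (A : Matrix m n ℂ) : (Aᴴ * A).trace.re = ∑ i, ∑ j, Complex.normSq (A i j) := by
  simp [Matrix.trace, Matrix.mul_apply, Complex.normSq_apply, Finset.sum_comm (γ := n)]

theorem Matrix.norm_le_sqrt_re_trace_conjTranspose_mul_self {m n : Type*} [Fintype m]
    [Fintype n] (A : Matrix m n ℂ) : ‖A‖ ≤ √((Aᴴ * A).trace.re) := by
  refine (Matrix.norm_le_iff (Real.sqrt_nonneg _)).mpr fun i j => Real.le_sqrt_of_sq_le ?_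
  rw [Matrix.re_trace_conjTranspose_mul_self, Complex.sq_norm]
  have hrow : ∀ i, 0 ≤ ∑ j, Complex.normSq (A i j) := fun i =>
    Finset.sum_nonneg fun j _ => Complex.normSq_nonneg _
  calc Complex.normSq (A i j) ≤ ∑ j, Complex.normSq (A i j) :=
        Finset.single_le_sum (fun j _ => Complex.normSq_nonneg (A i j)) (Finset.mem_univ j)
    _ ≤ ∑ i, ∑ j, Complex.normSq (A i j) :=
        Finset.single_le_sum (fun i _ => hrow i) (Finset.mem_univ i)

theorem Matrix.kraus_apply_conjTranspose_mul_self_sub {ι n R : Type*} [Fintype ι]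
    [Fintype n] [DecidableEq n] [CommRing R] [StarRing R] {Φ : Matrix n n R → Matrix n n R}
    {V : ι → Matrix n n R} (hV : ∀ X, Φ X = ∑ j, (V j)ᴴ * X * V j) (hunit : Φ 1 = 1)
    (X : Matrix n n R) :
    Φ (Xᴴ * X) - (Φ X)ᴴ * Φ X = ∑ j, (X * V j - V j * Φ X)ᴴ * (X * V j - V j * Φ X) := by
  have hVV : ∑ j, (V j)ᴴ * V j = 1 := by simpa [hV] using hunit
  have hadj : ∑ j, (V j)ᴴ * Xᴴ * V j = (Φ X)ᴴ := by
    simp [hV, Matrix.conjTranspose_sum, Matrix.conjTranspose_mul, Matrix.mul_assoc]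
  have hexpand : ∀ j, (X * V j - V j * Φ X)ᴴ * (X * V j - V j * Φ X) =
      (V j)ᴴ * (Xᴴ * X) * V j - (V j)ᴴ * Xᴴ * V j * Φ X - (Φ X)ᴴ * ((V j)ᴴ * X * V j)
        + (Φ X)ᴴ * ((V j)ᴴ * V j) * Φ X := fun j => by
    simp only [Matrix.conjTranspose_sub, Matrix.conjTranspose_mul]
    noncomm_ring
  simp only [hexpand, Finset.sum_add_distrib, Finset.sum_sub_distrib, ← Finset.sum_mul,
    ← Finset.mul_sum, hadj, hVV, ← hV]
  noncomm_ring

theorem IsUnitalChannel.re_trace_conjTranspose_mul_self_apply_le {d : ℕ}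
    {Φ : Md d →ₗ[ℂ] Md d} (hΦ : IsUnitalChannel Φ) (X : Md d) :
    ((Φ X)ᴴ * Φ X).trace.re ≤ (Xᴴ * X).trace.re := by
  obtain ⟨⟨n, V, hV⟩, hunit, htr⟩ := hΦ
  have hdefect := congrArg (fun M : Md d => M.trace.re)
    (Matrix.kraus_apply_conjTranspose_mul_self_sub hV hunit X)
  simp only [Matrix.trace_sub, Complex.sub_re, htr (Xᴴ * X), Matrix.trace_sum,
    Complex.re_sum] at hdefect
  have hnonneg : 0 ≤ ∑ j, ((X * V j - V j * Φ X)ᴴ * (X * V j - V j * Φ X)).trace.re :=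
    Finset.sum_nonneg fun j _ => by
      rw [Matrix.re_trace_conjTranspose_mul_self]
      exact Finset.sum_nonneg fun _ _ => Finset.sum_nonneg fun _ _ => Complex.normSq_nonneg _
  linarith

theorem hasBoundedOrbits_of_isUnitalChannel {d : ℕ} {L : Md d →ₗ[ℂ] Md d}
    (h : ∀ t : ℝ, 0 ≤ t → IsUnitalChannel (expL L t)) :
    HasBoundedOrbits (LinearMap.toContinuousLinearMap L) := fun X =>
  ⟨√((Xᴴ * X).trace.re), fun t ht =>
    (Matrix.norm_le_sqrt_re_trace_conjTranspose_mul_self _).trans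
      (Real.sqrt_le_sqrt ((h t ht).re_trace_conjTranspose_mul_self_apply_le X))⟩

/-- `M_d = P ⊕ N`: every matrix decomposes uniquely as a sum of an
element of `P` and an element of `N`. -/
theorem stmt_8 (d : ℕ) (L : Md d →ₗ[ℂ] Md d)
    (h : ∀ t : ℝ, 0 ≤ t → IsUnitalChannel (expL L t)) :
    ∀ Z : Md d, ∃! p : Md d × Md d,
      p.1 ∈ periphGen L ∧ p.2 ∈ decaySet L ∧ Z = p.1 + p.2 :=
  Submodule.existsUnique_mem_mem_eq_add_of_isCompl
    ⟨disjoint_peripheralSpan_decaySubmodule _,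
      codisjoint_iff.mpr
        (hasBoundedOrbits_of_isUnitalChannel h).peripheralSpan_sup_decaySubmodule⟩
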